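/- arXiv:2204.08439 — 3 statements merged into one kernel-verified Lean document; each statement's English description precedes it below -/
import Mathlib

section
/- Let p and q be probability distributions on ℤ supported on the nonnegative integers with p(0) > 0 and q(0) > 0. If (p*q̃)(n) ≥ 0 for all n ∈ ℤ and (q*p̃)(n) ≥ 0 for all n ∈ ℤ, then p = q. -/
/-- Convolution of two sequences on `ℤ`: `(a*b)(n) = ∑_{k∈ℤ} a(k)·b(n−k)`.
For supported-below sequences this `tsum` has finitely many nonzero terms. -/
noncomputable def conv (a b : ℤ → ℝ) : ℤ → ℝ := fun n => ∑' k : ℤ, a k * b (n - k)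

/-- A sequence is supported below if it vanishes for all sufficiently negative indices. -/
def SuppBelow (a : ℤ → ℝ) : Prop := ∃ N : ℤ, ∀ n : ℤ, n < N → a n = 0

/-- A probability distribution on `ℤ`: nonnegative with total sum 1. -/
def IsProbDist (p : ℤ → ℝ) : Prop := (∀ n : ℤ, 0 ≤ p n) ∧ HasSum p 1

/-- `qt` is the reciprocal sequence `q̃` of `q`, relative to `nstar = n_*(q)`,
the least index where `q` is positive: `q̃` vanishes below `−n_*(q)` and
`(q̃*q)(n) = δ_{n,0}` for all `n`. -/
def IsRecip (q qt : ℤ → ℝ) (nstar : ℤ) : Prop :=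
  IsLeast {n : ℤ | 0 < q n} nstar ∧ (∀ n : ℤ, n < -nstar → qt n = 0) ∧
  (∀ n : ℤ, conv qt q n = if n = 0 then (1 : ℝ) else 0)

/-- The generalized Poisson sequence `P_λ : ℤ → ℝ`,
`P_λ(n) = e^{−λ}·λ^n/n!` for `n ≥ 0` and `P_λ(n) = 0` for `n < 0`. -/
noncomputable def poisson (lam : ℝ) : ℤ → ℝ :=
  fun n => if 0 ≤ n then Real.exp (-lam) * lam ^ n.toNat / (Nat.factorial n.toNat : ℝ) else 0

/-!
Write `r = p * q̃` and `s = q * p̃`; both are nonnegative by hypothesis and supported on `ℕ`.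
By commutativity and associativity of convolution, `r * s = p * (q̃ * q) * p̃ = p * p̃ = δ`.
A product of two nonnegative sequences on `ℕ` can only be `δ` if each is a multiple of `δ`:
for `n > 0` the term `r(n) s(0)` of `(r * s)(n) = 0` must vanish, and `r(0) s(0) = 1`.
Hence `p = r * q = r(0) • q`, and comparing total masses gives `r(0) = 1`.
-/

open Finset

def SupportedOnNonneg (a : ℤ → ℝ) : Prop := ∀ n : ℤ, n < 0 → a n = 0

lemma conv_comm (a b : ℤ → ℝ) : conv a b = conv b a := by
  funext n
  rw [conv, conv, ← (Equiv.subLeft n).tsum_eq]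
  simp only [Equiv.subLeft_apply, sub_sub_cancel, mul_comm]

lemma conv_single_left (c : ℝ) (a : ℤ → ℝ) : conv (Pi.single 0 c) a = c • a := by
  funext n
  rw [conv, tsum_eq_single 0 fun k hk => by simp [hk]]
  simp

lemma conv_single_one_right (a : ℤ → ℝ) : conv a (Pi.single 0 1) = a := by
  rw [conv_comm, conv_single_left, one_smul]

lemma IsRecip.supportedOnNonneg {q qt : ℤ → ℝ} (h : IsRecip q qt 0) : SupportedOnNonneg qt :=
  fun n hn => h.2.1 n (by omega)

lemma IsRecip.conv_eq_single {q qt : ℤ → ℝ} {m : ℤ} (h : IsRecip q qt m) :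
    conv qt q = Pi.single 0 1 := by
  funext n
  rw [h.2.2 n, Pi.single_apply]

namespace SupportedOnNonneg

variable {a b c : ℤ → ℝ}

lemma conv_eq_sum_of_subset (ha : SupportedOnNonneg a) (hb : SupportedOnNonneg b) {n : ℤ}
    {s : Finset ℤ} (hs : Icc 0 n ⊆ s) : conv a b n = ∑ k ∈ s, a k * b (n - k) := by
  refine tsum_eq_sum fun k hk => ?_
  have hk' : k ∉ Icc 0 n := fun h => hk (hs h)
  rw [mem_Icc, not_and_or, not_le, not_le] at hk'
  rcases hk' with hk' | hk'
  · rw [ha k hk', zero_mul]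
  · rw [hb (n - k) (by omega), mul_zero]

lemma conv (ha : SupportedOnNonneg a) (hb : SupportedOnNonneg b) :
    SupportedOnNonneg (_root_.conv a b) := fun n hn => by
  rw [ha.conv_eq_sum_of_subset hb subset_rfl, Icc_eq_empty (by omega), sum_empty]

lemma conv_assoc (ha : SupportedOnNonneg a) (hb : SupportedOnNonneg b)
    (hc : SupportedOnNonneg c) : _root_.conv (_root_.conv a b) c = _root_.conv a (_root_.conv b c) := by
  funext n
  have shifted : ∀ j ∈ Icc 0 n, _root_.conv b c (n - j) = ∑ k ∈ Icc 0 n, b (k - j) * c (n - k) := by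
    intro j hj
    rw [mem_Icc] at hj
    rw [_root_.conv, ← (Equiv.subRight j).tsum_eq fun m => b m * c (n - j - m)]
    simp only [Equiv.subRight_apply, sub_sub_sub_cancel_right]
    refine tsum_eq_sum fun k hk => ?_
    rw [mem_Icc, not_and_or, not_le, not_le] at hk
    rcases hk with hk | hk
    · rw [hb (k - j) (by omega), zero_mul]
    · rw [hc (n - k) (by omega), mul_zero]
  rw [(ha.conv hb).conv_eq_sum_of_subset hc subset_rfl,
    ha.conv_eq_sum_of_subset (hb.conv hc) subset_rfl]
  calc ∑ k ∈ Icc 0 n, _root_.conv a b k * c (n - k)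
      = ∑ k ∈ Icc 0 n, ∑ j ∈ Icc 0 n, a j * (b (k - j) * c (n - k)) :=
        sum_congr rfl fun k hk => by
          rw [ha.conv_eq_sum_of_subset hb (Icc_subset_Icc le_rfl (mem_Icc.mp hk).2), sum_mul]
          exact sum_congr rfl fun j _ => mul_assoc _ _ _
    _ = ∑ j ∈ Icc 0 n, a j * ∑ k ∈ Icc 0 n, b (k - j) * c (n - k) := by
        rw [sum_comm]
        simp_rw [mul_sum]
    _ = ∑ j ∈ Icc 0 n, a j * _root_.conv b c (n - j) :=
        sum_congr rfl fun j hj => by rw [shifted j hj]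

lemma eq_single_of_conv_eq_single (ha : SupportedOnNonneg a) (hb : SupportedOnNonneg b)
    (ha' : ∀ n, 0 ≤ a n) (hb' : ∀ n, 0 ≤ b n) (hab : _root_.conv a b = Pi.single 0 1) :
    a = Pi.single 0 (a 0) := by
  have hδ : ∀ n, ∑ k ∈ Icc 0 n, a k * b (n - k) = (Pi.single 0 1 : ℤ → ℝ) n := fun n => by
    rw [← ha.conv_eq_sum_of_subset hb subset_rfl, hab]
  have hb0 : b 0 ≠ 0 := by
    intro h
    simpa [h] using hδ 0
  funext n
  rcases lt_trichotomy n 0 with hn | rfl | hn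
  · simp [ha n hn, hn.ne]
  · simp
  · have hterms := (sum_eq_zero_iff_of_nonneg fun k _ => mul_nonneg (ha' k) (hb' (n - k))).mp
      (by simp [hδ n, hn.ne']) n (mem_Icc.mpr ⟨hn.le, le_rfl⟩)
    rw [sub_self, mul_eq_zero, or_iff_left hb0] at hterms
    simp [hterms, hn.ne']

end SupportedOnNonneg

theorem amaj_antisymm_zero_general (p q pt qt : ℤ → ℝ)
    (hp : IsProbDist p) (hq : IsProbDist q)
    (hp0 : ∀ n : ℤ, n < 0 → p n = 0) (hq0 : ∀ n : ℤ, n < 0 → q n = 0)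
    (hpt : IsRecip p pt 0) (hqt : IsRecip q qt 0)
    (hpq : ∀ n : ℤ, 0 ≤ conv p qt n) (hqp : ∀ n : ℤ, 0 ≤ conv q pt n) :
    p = q := by
  have hp0 : SupportedOnNonneg p := hp0
  have hq0 : SupportedOnNonneg q := hq0
  have hpt0 := hpt.supportedOnNonneg
  have hqt0 := hqt.supportedOnNonneg
  have hrs : conv (conv p qt) (conv q pt) = Pi.single 0 1 := by
    rw [hp0.conv_assoc hqt0 (hq0.conv hpt0), ← hqt0.conv_assoc hq0 hpt0, hqt.conv_eq_single,
      conv_single_left, one_smul, conv_comm, hpt.conv_eq_single]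
  have hr := (hp0.conv hqt0).eq_single_of_conv_eq_single (hq0.conv hpt0) hpq hqp hrs
  have hpr : p = conv p qt 0 • q := by
    rw [← conv_single_left, ← hr, hp0.conv_assoc hqt0 hq0, hqt.conv_eq_single,
      conv_single_one_right]
  have hmass : conv p qt 0 = 1 := by
    have h : HasSum (conv p qt 0 • q) (conv p qt 0 • 1) := hq.2.const_smul _
    rw [← hpr, smul_eq_mul, mul_one] at h
    exact h.unique hp.2
  rw [hpr, hmass, one_smul]

/-- if `p, q` are probability distributions supported on the
nonnegative integers with `p(0) > 0` and `q(0) > 0`, and both `(p*q̃)(n) ≥ 0`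
and `(q*p̃)(n) ≥ 0` hold for all `n ∈ ℤ`, then `p = q`. -/
theorem amaj_antisymm_zero (p q pt qt : ℤ → ℝ)
    (hp : IsProbDist p) (hq : IsProbDist q)
    (hp0 : ∀ n : ℤ, n < 0 → p n = 0) (hq0 : ∀ n : ℤ, n < 0 → q n = 0)
    (hppos : 0 < p 0) (hqpos : 0 < q 0)
    (hpt : IsRecip p pt 0) (hqt : IsRecip q qt 0)
    (hpq : ∀ n : ℤ, 0 ≤ conv p qt n) (hqp : ∀ n : ℤ, 0 ≤ conv q pt n) :
    p = q :=
  amaj_antisymm_zero_general p q pt qt hp hq hp0 hq0 hpt hqt hpq hqp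
end

section
/- Let p be a supported-below probability distribution on ℤ with finite second moment Σ_n n²·p(n) < ∞. Then for every λ ≥ 0 with P_λ ≻_a p one has λ ≥ Var(p), and for every λ ≥ 0 with p ≻_a P_λ one has Var(p) ≥ λ. Consequently F_max(p) ≥ 4·Var(p) ≥ F_min(p). -/
/-- The max-QFI `F_max(p) = inf{4λ | λ ≥ 0, P_λ ≻_a p} ∈ [0,∞]` (with
`inf ∅ = ∞`).  Since `P_λ ≻_a p` means `(P_λ * p̃)(n) ≥ 0` for all `n`, it is
expressed through the reciprocal sequence `pt = p̃` of `p`. -/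
noncomputable def Fmax (pt : ℤ → ℝ) : ENNReal :=
  sInf {x : ENNReal | ∃ lam : ℝ, 0 ≤ lam ∧
    (∀ n : ℤ, 0 ≤ conv (poisson lam) pt n) ∧ x = ENNReal.ofReal (4 * lam)}

/-- The min-QFI `F_min(p) = sup{4λ | λ ≥ 0, p ≻_a P_λ} ∈ [0,∞]`.  Since
`P̃_λ = P_{−λ}`, the condition `p ≻_a P_λ` reads `(p * P_{−λ})(n) ≥ 0`. -/
noncomputable def Fmin (p : ℤ → ℝ) : ENNReal :=
  sSup {x : ENNReal | ∃ lam : ℝ, 0 ≤ lam ∧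
    (∀ n : ℤ, 0 ≤ conv p (poisson (-lam)) n) ∧ x = ENNReal.ofReal (4 * lam)}

/-- Mean `μ_p = ∑_n n·p(n)` of a distribution on `ℤ`. -/
noncomputable def mean (p : ℤ → ℝ) : ℝ := ∑' n : ℤ, (n : ℝ) * p n

/-- Variance `Var(p) = ∑_n (n − μ_p)²·p(n)` of a distribution on `ℤ`. -/
noncomputable def variance (p : ℤ → ℝ) : ℝ := ∑' n : ℤ, ((n : ℝ) - mean p) ^ 2 * p n

/-! If `P_λ ≻_a p`, then `r := P_λ * p̃` is nonnegative and `r * p = P_λ`; if `p ≻_a P_λ`, then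
`s := p * P_{-λ}` is nonnegative and `s * P_λ = p`. In both cases a distribution `t` with finite
second moment is the convolution `r * q` of a nonnegative sequence `r` with a distribution `q`.
The bound `r n * q m ≤ t (n + m)` transfers the finite second moment from `t` to `r`, comparing
total masses makes `r` a probability distribution, and since variances add under convolution,
`Var q ≤ Var t`. As `Var P_λ = λ`, this gives both inequalities, and the bounds on `F_max` and
`F_min` follow by taking the infimum and the supremum. -/

open Finset Nat Real

section Convolution

variable {a b c : ℤ → ℝ}

lemma summable_mul_sub_of_suppBelow (ha : SuppBelow a) (hb : SuppBelow b) (n : ℤ) :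
    Summable fun k => a k * b (n - k) := by
  obtain ⟨Na, hNa⟩ := ha
  obtain ⟨Nb, hNb⟩ := hb
  refine summable_of_ne_finset_zero (s := Icc Na (n - Nb)) fun k hk => ?_
  rcases lt_or_ge k Na with hk' | hk'
  · rw [hNa k hk', zero_mul]
  · rw [hNb _ (by simp only [mem_Icc, not_and_or, not_le] at hk; omega), mul_zero]

lemma suppBelow_conv (ha : SuppBelow a) (hb : SuppBelow b) : SuppBelow (conv a b) := by
  obtain ⟨Na, hNa⟩ := ha
  obtain ⟨Nb, hNb⟩ := hb
  refine ⟨Na + Nb, fun n hn => (tsum_congr fun k => ?_).trans tsum_zero⟩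
  rcases lt_or_ge k Na with hk | hk
  · rw [hNa k hk, zero_mul]
  · rw [hNb _ (by omega), mul_zero]

lemma conv_delta (a : ℤ → ℝ) : conv a (fun n => if n = 0 then 1 else 0) = a := by
  funext n
  simp only [conv]
  rw [tsum_eq_single n fun k hk => by rw [if_neg (sub_ne_zero.mpr hk.symm), mul_zero]]
  simp

lemma mul_le_conv (ha : SuppBelow a) (hb : SuppBelow b) (ha0 : ∀ n, 0 ≤ a n)
    (hb0 : ∀ n, 0 ≤ b n) (k n : ℤ) : a k * b (n - k) ≤ conv a b n :=
  (summable_mul_sub_of_suppBelow ha hb n).le_tsum k fun j _ => mul_nonneg (ha0 j) (hb0 _)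

def antidiagonalEquiv : ℤ × ℤ ≃ ℤ × ℤ where
  toFun q := (q.2, q.1 - q.2)
  invFun q := (q.1 + q.2, q.1)
  left_inv q := by simp
  right_inv q := by simp

lemma hasSum_mul_conv {f : ℤ → ℝ} {s : ℝ}
    (h : HasSum (fun q : ℤ × ℤ => f (q.1 + q.2) * (a q.1 * b q.2)) s) :
    HasSum (fun n => f n * conv a b n) s := by
  have hG := antidiagonalEquiv.hasSum_iff.mpr h
  refine hG.prod_fiberwise fun n => ?_
  have hfib := (hG.summable.prod_factor n).hasSum
  simp only [Function.comp_def, antidiagonalEquiv, Equiv.coe_fn_mk, add_sub_cancel,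
    tsum_mul_left] at hfib ⊢
  exact hfib

lemma conv_assoc (ha : SuppBelow a) (hb : SuppBelow b) (hc : SuppBelow c) :
    conv (conv a b) c = conv a (conv b c) := by
  obtain ⟨Na, hNa⟩ := ha
  obtain ⟨Nb, hNb⟩ := hb
  obtain ⟨Nc, hNc⟩ := hc
  funext n
  set F : ℤ × ℤ → ℝ := fun q => a q.1 * (b q.2 * c (n - q.1 - q.2))
  have hF : Summable F := by
    refine summable_of_ne_finset_zero
      (s := Icc Na (n - Nb - Nc) ×ˢ Icc Nb (n - Na - Nc)) fun q hq => ?_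
    simp only [F]
    rcases lt_or_ge q.1 Na with h1 | h1
    · rw [hNa _ h1, zero_mul]
    rcases lt_or_ge q.2 Nb with h2 | h2
    · rw [hNb _ h2, zero_mul, mul_zero]
    rw [hNc _ (by simp only [mem_product, mem_Icc] at hq; omega), mul_zero, mul_zero]
  have hleft : HasSum (fun k => c (n - k) * conv a b k) (∑' q, F q) :=
    hasSum_mul_conv (hF.hasSum.congr_fun fun q => by simp only [F]; ring_nf)
  calc conv (conv a b) c n = ∑' k, c (n - k) * conv a b k := tsum_congr fun k => mul_comm _ _
    _ = ∑' q, F q := hleft.tsum_eq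
    _ = conv a (conv b c) n := by
      simp only [hF.tsum_prod, F, conv, tsum_mul_left]

end Convolution

section Poisson

lemma hasSum_int_of_hasSum_nat {f : ℤ → ℝ} {s : ℝ} (hf : ∀ n < 0, f n = 0)
    (h : HasSum (fun n : ℕ => f n) s) : HasSum f s :=
  (Nat.cast_injective.hasSum_iff fun n hn =>
    hf n (not_le.mp fun h0 => hn ⟨n.toNat, Int.toNat_of_nonneg h0⟩)).mp h

lemma poisson_natCast (lam : ℝ) (n : ℕ) :
    poisson lam n = exp (-lam) * (lam ^ n / n !) := by
  simp [poisson, mul_div_assoc]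

lemma poisson_of_neg (lam : ℝ) {n : ℤ} (hn : n < 0) : poisson lam n = 0 := by
  simp [poisson, not_le.mpr hn]

lemma poisson_zero_apply (lam : ℝ) : poisson lam 0 = exp (-lam) := by
  simp [poisson]

lemma poisson_nonneg {lam : ℝ} (hlam : 0 ≤ lam) (n : ℤ) : 0 ≤ poisson lam n := by
  unfold poisson
  split_ifs <;> positivity

lemma suppBelow_poisson (lam : ℝ) : SuppBelow (poisson lam) :=
  ⟨0, fun _ hn => poisson_of_neg lam hn⟩

lemma hasSum_poisson_nat (lam : ℝ) : HasSum (fun n : ℕ => poisson lam n) 1 := by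
  have h := (NormedSpace.expSeries_div_hasSum_exp lam).mul_left (exp (-lam))
  rwa [← Real.exp_eq_exp_ℝ, ← Real.exp_add, neg_add_cancel, Real.exp_zero,
    ← funext (poisson_natCast lam)] at h

lemma hasSum_descFactorial_mul_poisson_nat (lam : ℝ) (k : ℕ) :
    HasSum (fun n : ℕ => (n.descFactorial k : ℝ) * poisson lam n) (lam ^ k) := by
  rw [← hasSum_nat_add_iff' k]
  have hvanish : ∑ i ∈ range k, (i.descFactorial k : ℝ) * poisson lam i = 0 :=
    sum_eq_zero fun i hi => by
      rw [Nat.descFactorial_eq_zero_iff_lt.mpr (mem_range.mp hi), Nat.cast_zero, zero_mul]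
  rw [hvanish, sub_zero]
  have h := (hasSum_poisson_nat lam).mul_left (lam ^ k)
  rw [mul_one] at h
  refine h.congr_fun fun n => ?_
  have hfact : ((n + k).descFactorial k : ℝ) * n ! = (n + k) ! := by
    have h := Nat.factorial_mul_descFactorial (Nat.le_add_left k n)
    rw [Nat.add_sub_cancel, mul_comm] at h
    exact_mod_cast h
  rw [poisson_natCast, poisson_natCast, ← hfact, pow_add]
  field_simp

lemma hasSum_poisson (lam : ℝ) : HasSum (poisson lam) 1 :=
  hasSum_int_of_hasSum_nat (fun _ hn => poisson_of_neg lam hn) (hasSum_poisson_nat lam)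

lemma hasSum_mul_poisson (lam : ℝ) : HasSum (fun n : ℤ => (n : ℝ) * poisson lam n) lam :=
  hasSum_int_of_hasSum_nat (fun _ hn => by rw [poisson_of_neg lam hn, mul_zero])
    (by simpa using hasSum_descFactorial_mul_poisson_nat lam 1)

lemma hasSum_mul_sub_one_mul_poisson (lam : ℝ) :
    HasSum (fun n : ℤ => (n : ℝ) * (n - 1) * poisson lam n) (lam ^ 2) :=
  hasSum_int_of_hasSum_nat (fun _ hn => by rw [poisson_of_neg lam hn, mul_zero])
    (by simpa only [Nat.cast_descFactorial_two, Int.cast_natCast] using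
      hasSum_descFactorial_mul_poisson_nat lam 2)

lemma summable_sq_mul_poisson (lam : ℝ) : Summable fun n : ℤ => (n : ℝ) ^ 2 * poisson lam n :=
  ((hasSum_mul_sub_one_mul_poisson lam).add (hasSum_mul_poisson lam)).summable.congr
    fun n => by ring

lemma mean_poisson (lam : ℝ) : mean (poisson lam) = lam :=
  (hasSum_mul_poisson lam).tsum_eq

lemma variance_poisson (lam : ℝ) : variance (poisson lam) = lam := by
  have h := ((hasSum_mul_sub_one_mul_poisson lam).add
    ((hasSum_mul_poisson lam).mul_left (1 - 2 * lam))).add ((hasSum_poisson lam).mul_left (lam ^ 2))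
  rw [variance, mean_poisson]
  convert h.tsum_eq using 1
  · exact tsum_congr fun n => by ring
  · ring

lemma poisson_conv_poisson (x y : ℝ) : conv (poisson x) (poisson y) = poisson (x + y) := by
  funext n
  rcases lt_or_ge n 0 with hn | hn
  · refine ((tsum_congr fun k => ?_).trans tsum_zero).trans (poisson_of_neg _ hn).symm
    rcases lt_or_ge k 0 with hk | hk
    · rw [poisson_of_neg x hk, zero_mul]
    · rw [poisson_of_neg y (by omega), mul_zero]
  lift n to ℕ using hn
  have hterms : HasSum (fun k : ℤ => poisson x k * poisson y (n - k))
      (∑ k ∈ range (n + 1), poisson x k * poisson y (n - k)) :=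
    hasSum_int_of_hasSum_nat (fun k hk => by rw [poisson_of_neg x hk, zero_mul])
      (hasSum_sum_of_ne_finset_zero fun k hk => by
        rw [poisson_of_neg y (by simp only [mem_range, not_lt] at hk; omega), mul_zero])
  rw [conv, hterms.tsum_eq]
  calc ∑ k ∈ range (n + 1), poisson x k * poisson y (n - k)
      = ∑ k ∈ range (n + 1), exp (-(x + y)) / n ! * (x ^ k * y ^ (n - k) * n.choose k) :=
        sum_congr rfl fun k hk => by
          have hkn : k ≤ n := Nat.lt_succ_iff.mp (mem_range.mp hk)
          rw [show (n : ℤ) - k = ((n - k : ℕ) : ℤ) by omega, poisson_natCast, poisson_natCast,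
            Nat.cast_choose ℝ hkn, neg_add, Real.exp_add]
          field_simp
    _ = poisson (x + y) n := by
      rw [← mul_sum, ← add_pow, poisson_natCast]
      ring

lemma poisson_zero : poisson 0 = fun n => if n = 0 then 1 else 0 := by
  funext n
  rcases lt_trichotomy n 0 with hn | rfl | hn
  · rw [poisson_of_neg 0 hn, if_neg hn.ne]
  · simp [poisson]
  · lift n to ℕ using hn.le
    have hn0 : n ≠ 0 := by omega
    simp [poisson_natCast, hn0]

end Poisson

section Moments

variable {a b : ℤ → ℝ}

lemma summable_norm_sub_pow_mul (ha : Summable a) (ha2 : Summable fun n : ℤ => (n : ℝ) ^ 2 * a n)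
    (c : ℝ) {k : ℕ} (hk : k ≤ 2) : Summable fun n : ℤ => ‖((n : ℝ) - c) ^ k * a n‖ := by
  refine Summable.of_nonneg_of_le (fun n => norm_nonneg _) (fun n => ?_)
    ((ha.abs.mul_left (1 + 2 * c ^ 2)).add (ha2.abs.mul_left 2))
  have hpow : |(n : ℝ) - c| ^ k ≤ 1 + 2 * c ^ 2 + 2 * (n : ℝ) ^ 2 := by
    have h2 : |(n : ℝ) - c| ^ 2 ≤ 2 * c ^ 2 + 2 * (n : ℝ) ^ 2 := by
      rw [sq_abs]; nlinarith [sq_nonneg ((n : ℝ) + c)]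
    interval_cases k <;> nlinarith [abs_nonneg ((n : ℝ) - c)]
  rw [norm_mul, norm_pow, Real.norm_eq_abs, Real.norm_eq_abs, abs_mul, abs_pow (n : ℝ) 2,
    sq_abs]
  nlinarith [abs_nonneg (a n)]

lemma summable_of_le_shift {r g : ℤ → ℝ} (hr0 : ∀ n, 0 ≤ r n) (hg : Summable g) (m : ℤ)
    (hle : ∀ n, r n ≤ g (n + m)) : Summable r :=
  .of_nonneg_of_le hr0 hle ((Equiv.addRight m).summable_iff.mpr hg)

lemma summable_sq_mul_of_le_shift {r g : ℤ → ℝ} (hr0 : ∀ n, 0 ≤ r n) (hg : Summable g)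
    (hg2 : Summable fun n : ℤ => (n : ℝ) ^ 2 * g n) (m : ℤ) (hle : ∀ n, r n ≤ g (n + m)) :
    Summable fun n : ℤ => (n : ℝ) ^ 2 * r n := by
  have hshift : Summable fun n : ℤ => (n : ℝ) ^ 2 * g (n + m) := by
    have h := (Equiv.addRight m).summable_iff.mpr (summable_norm_sub_pow_mul hg hg2 m le_rfl).of_norm
    simpa [Function.comp_def] using h
  exact .of_nonneg_of_le (fun n => mul_nonneg (sq_nonneg _) (hr0 n))
    (fun n => mul_le_mul_of_nonneg_left (hle n) (sq_nonneg _)) hshift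

lemma summable_norm_mul (ha : Summable a) (ha2 : Summable fun n : ℤ => (n : ℝ) ^ 2 * a n) :
    Summable fun n : ℤ => ‖(n : ℝ) * a n‖ := by
  simpa using summable_norm_sub_pow_mul ha ha2 0 one_le_two

lemma hasSum_mean (ha : Summable a) (ha2 : Summable fun n : ℤ => (n : ℝ) ^ 2 * a n) :
    HasSum (fun n : ℤ => (n : ℝ) * a n) (mean a) :=
  (summable_norm_mul ha ha2).of_norm.hasSum

lemma hasSum_sub_mean_mul (ha1 : HasSum a 1) (ha2 : Summable fun n : ℤ => (n : ℝ) ^ 2 * a n) :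
    HasSum (fun n : ℤ => ((n : ℝ) - mean a) * a n) 0 := by
  simpa [sub_mul] using (hasSum_mean ha1.summable ha2).sub (ha1.mul_left (mean a))

lemma hasSum_variance (ha : Summable a) (ha2 : Summable fun n : ℤ => (n : ℝ) ^ 2 * a n) :
    HasSum (fun n : ℤ => ((n : ℝ) - mean a) ^ 2 * a n) (variance a) :=
  (summable_norm_sub_pow_mul ha ha2 (mean a) le_rfl).of_norm.hasSum

lemma variance_nonneg (ha0 : ∀ n, 0 ≤ a n) : 0 ≤ variance a :=
  tsum_nonneg fun n => mul_nonneg (sq_nonneg _) (ha0 n)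

lemma hasSum_conv {s t : ℝ} (ha : HasSum a s) (hb : HasSum b t)
    (ha' : Summable fun n => ‖a n‖) (hb' : Summable fun n => ‖b n‖) :
    HasSum (conv a b) (s * t) := by
  simpa using hasSum_mul_conv (f := fun _ => 1)
    (by simpa using ha.mul hb (summable_mul_of_summable_norm ha' hb'))

lemma mean_conv (ha1 : HasSum a 1) (hb1 : HasSum b 1)
    (ha2 : Summable fun n : ℤ => (n : ℝ) ^ 2 * a n) (hb2 : Summable fun n : ℤ => (n : ℝ) ^ 2 * b n) :
    mean (conv a b) = mean a + mean b := by
  have hA := (hasSum_mean ha1.summable ha2).mul hb1 (summable_mul_of_summable_norm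
    (summable_norm_mul ha1.summable ha2) hb1.summable.norm)
  have hB := ha1.mul (hasSum_mean hb1.summable hb2) (summable_mul_of_summable_norm
    ha1.summable.norm (summable_norm_mul hb1.summable hb2))
  have h := hasSum_mul_conv (a := a) (b := b) (f := fun n : ℤ => (n : ℝ))
    ((hA.add hB).congr_fun fun q => by push_cast; ring)
  rw [mean, h.tsum_eq]
  ring

lemma variance_conv (ha1 : HasSum a 1) (hb1 : HasSum b 1)
    (ha2 : Summable fun n : ℤ => (n : ℝ) ^ 2 * a n) (hb2 : Summable fun n : ℤ => (n : ℝ) ^ 2 * b n) :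
    variance (conv a b) = variance a + variance b := by
  set μa := mean a
  set μb := mean b
  have hva := summable_norm_sub_pow_mul ha1.summable ha2 μa le_rfl
  have hvb := summable_norm_sub_pow_mul hb1.summable hb2 μb le_rfl
  have hma : Summable fun n : ℤ => ‖((n : ℝ) - μa) * a n‖ := by
    simpa using summable_norm_sub_pow_mul ha1.summable ha2 μa one_le_two
  have hmb : Summable fun n : ℤ => ‖((n : ℝ) - μb) * b n‖ := by
    simpa using summable_norm_sub_pow_mul hb1.summable hb2 μb one_le_two
  have hsA := summable_mul_of_summable_norm hva hb1.summable.norm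
  have hsB := summable_mul_of_summable_norm hma hmb
  have hsC := summable_mul_of_summable_norm ha1.summable.norm hvb
  have hA := (hasSum_variance ha1.summable ha2).mul hb1 hsA
  have hB := (hasSum_sub_mean_mul ha1 ha2).mul (hasSum_sub_mean_mul hb1 hb2) hsB
  have hC := ha1.mul (hasSum_variance hb1.summable hb2) hsC
  have h := hasSum_mul_conv (a := a) (b := b) (f := fun n : ℤ => ((n : ℝ) - (μa + μb)) ^ 2)
    (((hA.add (hB.mul_left 2)).add hC).congr_fun fun q => by push_cast; ring)
  rw [variance, mean_conv ha1 hb1 ha2 hb2, h.tsum_eq]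
  ring

end Moments

theorem variance_le_variance_of_conv_eq {r q t : ℤ → ℝ} (hr0 : ∀ n, 0 ≤ r n) (hrb : SuppBelow r)
    (hq0 : ∀ n, 0 ≤ q n) (hqb : SuppBelow q) (hq1 : HasSum q 1)
    (hq2 : Summable fun n : ℤ => (n : ℝ) ^ 2 * q n) {m : ℤ} (hm : 0 < q m)
    (hrq : conv r q = t) (ht1 : HasSum t 1) (ht2 : Summable fun n : ℤ => (n : ℝ) ^ 2 * t n) :
    variance q ≤ variance t := by
  have hle : ∀ n, r n ≤ (q m)⁻¹ * t (n + m) := fun n => by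
    rw [inv_mul_eq_div, le_div_iff₀ hm, ← hrq]
    simpa using mul_le_conv hrb hqb hr0 hq0 n (n + m)
  have hr := summable_of_le_shift hr0 (ht1.summable.mul_left _) m hle
  have hr2 := summable_sq_mul_of_le_shift hr0 (ht1.summable.mul_left _)
    (by simpa only [mul_left_comm] using ht2.mul_left (q m)⁻¹) m hle
  have hr1 : HasSum r 1 := by
    have h := (hasSum_conv hr.hasSum hq1 hr.norm hq1.summable.norm).unique (hrq ▸ ht1)
    rw [mul_one] at h
    exact h ▸ hr.hasSum
  rw [← hrq, variance_conv hr1 hq1 hr2 hq2]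
  linarith [variance_nonneg hr0]

/-- for a supported-below probability distribution `p` on `ℤ`
with finite second moment: every `λ ≥ 0` with `P_λ ≻_a p` satisfies
`λ ≥ Var(p)`, every `λ ≥ 0` with `p ≻_a P_λ` satisfies `Var(p) ≥ λ`, and
consequently `F_max(p) ≥ 4·Var(p) ≥ F_min(p)`. -/
theorem var_between_qfi (p pt : ℤ → ℝ) (np : ℤ)
    (hp : IsProbDist p) (hpb : SuppBelow p)
    (hpt : IsRecip p pt np)
    (hp2 : Summable fun n : ℤ => (n : ℝ) ^ 2 * p n) :
    (∀ lam : ℝ, 0 ≤ lam → (∀ n : ℤ, 0 ≤ conv (poisson lam) pt n) →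
      variance p ≤ lam) ∧
    (∀ lam : ℝ, 0 ≤ lam → (∀ n : ℤ, 0 ≤ conv p (poisson (-lam)) n) →
      lam ≤ variance p) ∧
    ENNReal.ofReal (4 * variance p) ≤ Fmax pt ∧
    Fmin p ≤ ENNReal.ofReal (4 * variance p) := by
  obtain ⟨hp0, hp1⟩ := hp
  obtain ⟨hnp, hptb, hptp⟩ := hpt
  have hmax (lam : ℝ) (hpos : ∀ n, 0 ≤ conv (poisson lam) pt n) : variance p ≤ lam := by
    have hback : conv (conv (poisson lam) pt) p = poisson lam := by
      rw [conv_assoc (suppBelow_poisson lam) ⟨-np, hptb⟩ hpb, funext hptp, conv_delta]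
    simpa [variance_poisson] using variance_le_variance_of_conv_eq hpos
      (suppBelow_conv (suppBelow_poisson lam) ⟨-np, hptb⟩) hp0 hpb hp1 hp2 hnp.1 hback
      (hasSum_poisson lam) (summable_sq_mul_poisson lam)
  have hmin (lam : ℝ) (hlam : 0 ≤ lam) (hpos : ∀ n, 0 ≤ conv p (poisson (-lam)) n) :
      lam ≤ variance p := by
    have hback : conv (conv p (poisson (-lam))) (poisson lam) = p := by
      rw [conv_assoc hpb (suppBelow_poisson _) (suppBelow_poisson _), poisson_conv_poisson,
        neg_add_cancel, poisson_zero, conv_delta]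
    simpa [variance_poisson] using variance_le_variance_of_conv_eq (m := 0) hpos
      (suppBelow_conv hpb (suppBelow_poisson _)) (poisson_nonneg hlam) (suppBelow_poisson lam)
      (hasSum_poisson lam) (summable_sq_mul_poisson lam)
      (by simpa [poisson_zero_apply] using exp_pos (-lam)) hback hp1 hp2
  refine ⟨fun lam _ => hmax lam, hmin, le_sInf ?_, sSup_le ?_⟩
  · rintro _ ⟨lam, -, hpos, rfl⟩
    exact ENNReal.ofReal_le_ofReal (by linarith [hmax lam hpos])
  · rintro _ ⟨lam, hlam, hpos, rfl⟩
    exact ENNReal.ofReal_le_ofReal (by linarith [hmin lam hlam hpos])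
end

section
/- Sufficiency of a QFI gap for a-majorization: if p and q are supported-below probability distributions on ℤ with F_min(p) > F_max(q) (as values in [0,∞]), then p ≻_a q. -/
/-!
The QFI gap provides `μ < λ` with `p ≻_a P_λ` and `P_μ ≻_a q`. The Poisson sequences form a
one-parameter convolution group, their Laurent series being `e^{-s} e^{sX}`, so in the ring of
Laurent series `p * q̃ = (p * P_{-λ}) * P_{λ-μ} * (P_μ * q̃)`, a product of three series with
nonnegative coefficients.
-/

open PowerSeries

lemma SuppBelow.bddBelow_support {a : ℤ → ℝ} (ha : SuppBelow a) :
    BddBelow (Function.support a) :=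
  let ⟨N, hN⟩ := ha
  ⟨N, fun n hn => not_lt.mp fun h => hn (hN n h)⟩

noncomputable def SuppBelow.toLaurent {a : ℤ → ℝ} (ha : SuppBelow a) : LaurentSeries ℝ :=
  HahnSeries.ofSuppBddBelow a ha.bddBelow_support

@[simp]
lemma SuppBelow.coeff_toLaurent {a : ℤ → ℝ} (ha : SuppBelow a) : ha.toLaurent.coeff = a := rfl

lemma LaurentSeries.coeff_mul_eq_conv (x y : LaurentSeries ℝ) (n : ℤ) :
    (x * y).coeff n = conv x.coeff y.coeff n := by
  have hsupp : ∀ k ∉ (Finset.antidiagonal x.isPWO_support y.isPWO_support n).image Prod.fst,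
      x.coeff k * y.coeff (n - k) = 0 := by
    intro k hk
    by_contra hne
    refine hk (Finset.mem_image.mpr ⟨(k, n - k), ?_, rfl⟩)
    rw [Finset.mem_antidiagonal]
    exact ⟨left_ne_zero_of_mul hne, right_ne_zero_of_mul hne, by ring⟩
  rw [HahnSeries.coeff_mul, conv, tsum_eq_sum hsupp, Finset.sum_image]
  · refine Finset.sum_congr rfl fun ij hij => ?_
    rw [← (Finset.mem_antidiagonal.mp hij).2.2, add_sub_cancel_left]
  · intro u hu v hv huv
    rw [Finset.mem_coe, Finset.mem_antidiagonal] at hu hv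
    exact Prod.ext huv (by omega)

lemma conv_nonneg {a b : ℤ → ℝ} (ha : ∀ n, 0 ≤ a n) (hb : ∀ n, 0 ≤ b n) (n : ℤ) :
    0 ≤ conv a b n :=
  tsum_nonneg fun k => mul_nonneg (ha k) (hb (n - k))

lemma poisson_nonneg_s16 {s : ℝ} (hs : 0 ≤ s) (n : ℤ) : 0 ≤ poisson s n := by
  unfold poisson
  split_ifs <;> positivity

noncomputable def poissonLaurent (s : ℝ) : LaurentSeries ℝ :=
  HahnSeries.C (Real.exp (-s)) * (rescale s (exp ℝ) : LaurentSeries ℝ)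

lemma poissonLaurent_coeff (s : ℝ) : (poissonLaurent s).coeff = poisson s := by
  ext n
  rw [poissonLaurent, HahnSeries.C_mul_eq_smul, HahnSeries.coeff_smul, PowerSeries.coeff_coe,
    poisson]
  split_ifs
  · omega
  · simp
  · rw [coeff_rescale, coeff_exp, show n.natAbs = n.toNat by omega]
    simp [div_eq_mul_inv, mul_assoc]
  · omega

lemma poissonLaurent_add (s t : ℝ) :
    poissonLaurent (s + t) = poissonLaurent s * poissonLaurent t := by
  rw [poissonLaurent, poissonLaurent, poissonLaurent, ← exp_mul_exp_eq_exp_add,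
    PowerSeries.coe_mul, neg_add, Real.exp_add, map_mul]
  ring

lemma poissonLaurent_zero : poissonLaurent 0 = 1 := by
  simp [poissonLaurent]

lemma LaurentSeries.coeff_mul_nonneg {x y : LaurentSeries ℝ} (hx : ∀ n, 0 ≤ x.coeff n)
    (hy : ∀ n, 0 ≤ y.coeff n) (n : ℤ) : 0 ≤ (x * y).coeff n := by
  rw [coeff_mul_eq_conv]
  exact conv_nonneg hx hy n

theorem conv_nonneg_of_poisson_chain {p qt : ℤ → ℝ} {lam mu : ℝ} (hp : SuppBelow p)
    (hqt : SuppBelow qt) (hle : mu ≤ lam) (hpP : ∀ n, 0 ≤ conv p (poisson (-lam)) n)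
    (hPq : ∀ n, 0 ≤ conv (poisson mu) qt n) (n : ℤ) : 0 ≤ conv p qt n := by
  have hone : poissonLaurent (-lam) * poissonLaurent (lam - mu) * poissonLaurent mu = 1 := by
    rw [← poissonLaurent_add, ← poissonLaurent_add, show -lam + (lam - mu) + mu = 0 by ring,
      poissonLaurent_zero]
  have hfactor : hp.toLaurent * hqt.toLaurent =
      hp.toLaurent * poissonLaurent (-lam) * poissonLaurent (lam - mu) *
        (poissonLaurent mu * hqt.toLaurent) := by
    linear_combination -(hp.toLaurent * hqt.toLaurent) * hone
  have hleft : ∀ m, 0 ≤ (hp.toLaurent * poissonLaurent (-lam)).coeff m := by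
    simpa [LaurentSeries.coeff_mul_eq_conv, poissonLaurent_coeff] using hpP
  have hright : ∀ m, 0 ≤ (poissonLaurent mu * hqt.toLaurent).coeff m := by
    simpa [LaurentSeries.coeff_mul_eq_conv, poissonLaurent_coeff] using hPq
  have hmiddle : ∀ m, 0 ≤ (poissonLaurent (lam - mu)).coeff m := by
    simpa [poissonLaurent_coeff] using poisson_nonneg_s16 (sub_nonneg.mpr hle)
  simpa [← hfactor, LaurentSeries.coeff_mul_eq_conv] using
    LaurentSeries.coeff_mul_nonneg (LaurentSeries.coeff_mul_nonneg hleft hmiddle) hright n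

lemma exists_poisson_chain_of_Fmax_lt_Fmin {p qt : ℤ → ℝ} (hgap : Fmax qt < Fmin p) :
    ∃ lam mu : ℝ, mu ≤ lam ∧ (∀ n, 0 ≤ conv p (poisson (-lam)) n) ∧
      (∀ n, 0 ≤ conv (poisson mu) qt n) := by
  obtain ⟨_, ⟨lam, -, hpP, rfl⟩, hx⟩ := lt_sSup_iff.mp hgap
  obtain ⟨_, ⟨mu, hmu, hPq, rfl⟩, hy⟩ := sInf_lt_iff.mp hx
  have hlt := (ENNReal.ofReal_lt_ofReal_iff_of_nonneg (by positivity)).mp hy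
  exact ⟨lam, mu, by linarith, hpP, hPq⟩

theorem qfi_gap_amaj_general (p q qt : ℤ → ℝ) (nq : ℤ)
    (hpb : SuppBelow p) (hqt : IsRecip q qt nq)
    (hgap : Fmax qt < Fmin p) :
    ∀ n : ℤ, 0 ≤ conv p qt n := by
  obtain ⟨lam, mu, hle, hpP, hPq⟩ := exists_poisson_chain_of_Fmax_lt_Fmin hgap
  exact conv_nonneg_of_poisson_chain hpb ⟨-nq, hqt.2.1⟩ hle hpP hPq

/-- sufficiency of a QFI gap for a-majorization: if `p, q` are
supported-below probability distributions on `ℤ` with `F_min(p) > F_max(q)`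
in `[0,∞]`, then `p ≻_a q`. -/
theorem qfi_gap_amaj (p q pt qt : ℤ → ℝ) (np nq : ℤ)
    (hp : IsProbDist p) (hq : IsProbDist q)
    (hpb : SuppBelow p) (hqb : SuppBelow q)
    (hpt : IsRecip p pt np) (hqt : IsRecip q qt nq)
    (hgap : Fmax qt < Fmin p) :
    ∀ n : ℤ, 0 ≤ conv p qt n :=
  qfi_gap_amaj_general p q qt nq hpb hqt hgap
end
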